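/- arXiv:2507.22737 — 5 statements merged into one kernel-verified Lean document; each statement's English description precedes it below -/
import Mathlib

section
/- Let C* ⊂ ℝⁿ be the dual cone of future-directed causal covectors for the Minkowski metric η = diag(-1,1,...,1), and L(v) = -|v|_η^{1/2} for future-directed causal v. Then for any p in the interior of C*, the supremum H(p) = sup_v {⟨p,v⟩ - L(v)} is attained at an interior point of the causal cone, and H(p) = 1/(4|p|_η), where |p|_η is the Minkowski norm of the vector dual to p. -/
/- STATEMENT 3: Minkowski space (ℝ^{n+1}, η), η = diag(-1,1,...,1).  For a covector p in
the interior of the dual causal cone, i.e. p = η(w,·) with w future timelike, the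
Legendre-Fenchel supremum H(p) = sup_v {p(v) - L(v)} (where L(v) = -|v|_η^{1/2} on
future causal v, +∞ otherwise, so the sup is over causal v of p(v) + |v|_η^{1/2})
is attained at an interior (timelike) point of the causal cone and equals
1/(4|p|_η) = 1/(4|w|_η). -/

/-- The Minkowski inner product of signature (-,+,...,+) on ℝ^{n+1}. -/
def mink {n : ℕ} (v w : Fin (n+1) → ℝ) : ℝ :=
  (∑ i, v i * w i) - 2 * (v 0 * w 0)

/-- Future-directed causal vectors. -/
def IsCausalVec {n : ℕ} (v : Fin (n+1) → ℝ) : Prop :=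
  mink v v ≤ 0 ∧ 0 ≤ v 0

/-!
The supremum is taken along the ray through `w`. By the reverse Cauchy–Schwarz inequality,
a future causal `u` with `s = |u|_η` has `η(w,u) ≤ -c s`, where `c = |w|_η`, with equality on
the ray. So `H(p)` is the maximum over `s ≥ 0` of `√s - c s`, which is `1/(4c)`, reached at
`s = 1/(4c²)`.
-/

open Real

lemma mink_eq_sum_succ_sub {n : ℕ} (v w : Fin (n+1) → ℝ) :
    mink v w = ∑ i : Fin n, v i.succ * w i.succ - v 0 * w 0 := by
  simp only [mink, Fin.sum_univ_succ]
  ring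

lemma mink_smul_left {n : ℕ} (t : ℝ) (v w : Fin (n+1) → ℝ) :
    mink (t • v) w = t * mink v w := by
  simp only [mink, Pi.smul_apply, smul_eq_mul, mul_assoc, ← Finset.mul_sum]
  ring

lemma mink_smul_right {n : ℕ} (t : ℝ) (v w : Fin (n+1) → ℝ) :
    mink v (t • w) = t * mink v w := by
  simp only [mink, Pi.smul_apply, smul_eq_mul, mul_left_comm _ t, ← Finset.mul_sum]
  ring

lemma sqrt_sum_sq_succ_le_apply_zero {n : ℕ} {v : Fin (n+1) → ℝ} (hv : IsCausalVec v) :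
    √(∑ i : Fin n, v i.succ ^ 2) ≤ v 0 := by
  rw [sqrt_le_left hv.2]
  have := mink_eq_sum_succ_sub v v
  simp only [← sq] at this
  linarith [hv.1]

/-- Reverse Cauchy–Schwarz inequality for future-directed causal vectors. -/
lemma sqrt_neg_mink_mul_le_neg_mink {n : ℕ} {w u : Fin (n+1) → ℝ}
    (hw : IsCausalVec w) (hu : IsCausalVec u) :
    √(-mink w w) * √(-mink u u) ≤ -mink w u := by
  set P := √(∑ i : Fin n, w i.succ ^ 2)
  set Q := √(∑ i : Fin n, u i.succ ^ 2)
  have hP : P ^ 2 = ∑ i : Fin n, w i.succ ^ 2 := sq_sqrt (by positivity)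
  have hQ : Q ^ 2 = ∑ i : Fin n, u i.succ ^ 2 := sq_sqrt (by positivity)
  have hPw : P ≤ w 0 := sqrt_sum_sq_succ_le_apply_zero hw
  have hQu : Q ≤ u 0 := sqrt_sum_sq_succ_le_apply_zero hu
  have hspatial : ∑ i : Fin n, w i.succ * u i.succ ≤ P * Q :=
    sum_mul_le_sqrt_mul_sqrt _ _ _
  have hww : -mink w w = w 0 ^ 2 - P ^ 2 := by
    rw [hP, mink_eq_sum_succ_sub]; simp only [← sq]; ring
  have huu : -mink u u = u 0 ^ 2 - Q ^ 2 := by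
    rw [hQ, mink_eq_sum_succ_sub]; simp only [← sq]; ring
  have hPQ : P * Q ≤ w 0 * u 0 := mul_le_mul hPw hQu (sqrt_nonneg _) hw.2
  calc √(-mink w w) * √(-mink u u)
      = √((w 0 ^ 2 - P ^ 2) * (u 0 ^ 2 - Q ^ 2)) := by
        rw [hww, huu, sqrt_mul (sub_nonneg.2 (pow_le_pow_left₀ (sqrt_nonneg _) hPw 2))]
    _ ≤ w 0 * u 0 - P * Q := by
        rw [sqrt_le_left (by linarith)]
        nlinarith [sq_nonneg (P * u 0 - Q * w 0)]
    _ ≤ -mink w u := by rw [mink_eq_sum_succ_sub]; linarith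

lemma sqrt_sub_mul_le_one_div_four_mul {c s : ℝ} (hc : 0 < c) (hs : 0 ≤ s) :
    √s - c * s ≤ 1 / (4 * c) := by
  have h : (√s - c * s) * (4 * c) = 1 - (2 * c * √s - 1) ^ 2 := by
    linear_combination (4 * c ^ 2) * sq_sqrt hs
  rw [le_div_iff₀ (by positivity), h]
  linarith [sq_nonneg (2 * c * √s - 1)]

lemma sqrt_sub_mul_eq_one_div_four_mul {c : ℝ} (hc : 0 < c) :
    √((1 / (2 * c)) ^ 2) - c * (1 / (2 * c)) ^ 2 = 1 / (4 * c) := by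
  rw [sqrt_sq (by positivity)]
  field_simp
  ring

theorem stmt_3 {n : ℕ} (w : Fin (n+1) → ℝ)
    (hw : mink w w < 0) (hw0 : 0 < w 0) :   -- p := η(w,·) lies in int(C*)
    ∃ v : Fin (n+1) → ℝ,
      (mink v v < 0 ∧ 0 < v 0) ∧            -- v interior to the causal cone
      mink w v + Real.sqrt (Real.sqrt |mink v v|)
        = 1 / (4 * Real.sqrt (-(mink w w))) ∧
      ∀ u : Fin (n+1) → ℝ, IsCausalVec u →
        mink w u + Real.sqrt (Real.sqrt |mink u u|)
          ≤ 1 / (4 * Real.sqrt (-(mink w w))) := by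
  set c := √(-mink w w)
  have hc : 0 < c := sqrt_pos.2 (neg_pos.2 hw)
  have hww : mink w w = -c ^ 2 := by rw [sq_sqrt (neg_nonneg.2 hw.le), neg_neg]
  set s := (1 / (2 * c)) ^ 2
  have hs : 0 < s := by positivity
  have hvv : mink ((s / c) • w) ((s / c) • w) = -s ^ 2 := by
    rw [mink_smul_left, mink_smul_right, hww]; field_simp
  refine ⟨(s / c) • w, ⟨hvv ▸ neg_neg_of_pos (pow_pos hs 2), ?_⟩, ?_, fun u hu => ?_⟩
  · simp only [Pi.smul_apply, smul_eq_mul]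
    positivity
  · have hwv : mink w ((s / c) • w) = -(c * s) := by
      rw [mink_smul_right, hww]; field_simp
    rw [hvv, abs_neg, abs_of_pos (by positivity), sqrt_sq hs.le, hwv,
      ← sqrt_sub_mul_eq_one_div_four_mul hc]
    ring
  · have hcs := sqrt_neg_mink_mul_le_neg_mink ⟨hw.le, hw0.le⟩ hu
    rw [abs_of_nonpos hu.1]
    linarith [sqrt_sub_mul_le_one_div_four_mul hc (sqrt_nonneg (-mink u u))]
end

section
/- In Minkowski space with L(v) = -|v|_η^{1/2} on causal vectors, for p strictly inside the dual causal cone, any maximizer v of v ↦ p(v) - L(v) over the causal cone cannot lie on the boundary of the causal cone: if v is a nonzero null vector, then perturbing v to v(ε) = v + ε e₀ (with e₀ a future unit timelike vector) yields |v(ε)|_η^{1/2} ≥ (2λ₀)^{1/4} ε^{1/4} where λ₀ > 0 is the e₀-component of v, so p(v(ε)) + |v(ε)|_η^{1/2} > p(v) for small ε > 0. -/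
/-- The future unit timelike vector e₀. -/
def e0 {n : ℕ} : Fin (n+1) → ℝ := fun i => if i = 0 then 1 else 0

section Minkowski

variable {n : ℕ}

lemma mink_comm (v w : Fin (n+1) → ℝ) : mink v w = mink w v := by
  simp only [mink, mul_comm]

lemma mink_add_smul_right (v w u : Fin (n+1) → ℝ) (a : ℝ) :
    mink v (w + a • u) = mink v w + a * mink v u := by
  simp only [mink, Pi.add_apply, Pi.smul_apply, smul_eq_mul, mul_add, Finset.sum_add_distrib,
    Finset.mul_sum, mul_sub, mul_left_comm]
  ring

@[simp]
lemma e0_apply_zero : (e0 : Fin (n+1) → ℝ) 0 = 1 := if_pos rfl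

lemma e0_ne_zero : (e0 : Fin (n+1) → ℝ) ≠ 0 := fun h => by
  simpa using congrFun h 0

lemma mink_e0_right (v : Fin (n+1) → ℝ) : mink v e0 = - v 0 := by
  simp only [mink, e0, mul_ite, mul_one, mul_zero, Finset.sum_ite_eq', Finset.mem_univ,
    ↓reduceIte]
  ring

lemma mink_e0_e0 : mink (e0 : Fin (n+1) → ℝ) e0 = -1 := by
  simp [mink_e0_right]

lemma mink_add_smul_e0_self (v : Fin (n+1) → ℝ) (a : ℝ) :
    mink (v + a • e0) (v + a • e0) = mink v v - 2 * a * v 0 - a ^ 2 := by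
  rw [mink_add_smul_right, mink_comm _ v, mink_add_smul_right, mink_comm (v + a • e0) e0,
    mink_add_smul_right, mink_e0_right, mink_comm e0 v, mink_e0_right, mink_e0_e0]
  ring

lemma isCausalVec_e0 : IsCausalVec (e0 : Fin (n+1) → ℝ) :=
  ⟨by rw [mink_e0_e0]; norm_num, by simp⟩

lemma IsCausalVec.add_smul_e0 {v : Fin (n+1) → ℝ} (hv : IsCausalVec v) {a : ℝ}
    (ha : 0 ≤ a) : IsCausalVec (v + a • e0) := by
  refine ⟨?_, ?_⟩
  · rw [mink_add_smul_e0_self]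
    nlinarith [hv.1, hv.2]
  · simpa using add_nonneg hv.2 ha

lemma abs_mink_add_smul_e0_self_of_null {v : Fin (n+1) → ℝ} (hnull : mink v v = 0)
    (hv0 : 0 ≤ v 0) {ε : ℝ} (hε : 0 ≤ ε) :
    |mink (v + ε • e0) (v + ε • e0)| = 2 * v 0 * ε + ε ^ 2 := by
  rw [mink_add_smul_e0_self, hnull, abs_of_nonpos (by nlinarith)]
  ring

lemma apply_zero_pos_of_mink_neg {w : Fin (n+1) → ℝ}
    (hint : ∀ u : Fin (n+1) → ℝ, IsCausalVec u → u ≠ 0 → mink w u < 0) : 0 < w 0 := by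
  simpa [mink_e0_right] using hint e0 isCausalVec_e0 e0_ne_zero

end Minkowski

lemma lt_sqrt_sqrt_iff {x y : ℝ} (hx : 0 ≤ x) : x < √√y ↔ x ^ 4 < y := by
  rw [Real.lt_sqrt hx, Real.lt_sqrt (by positivity), ← pow_mul]

lemma exists_forall_mul_lt_sqrt_sqrt_mul {a c : ℝ} (ha : 0 < a) (hc : 0 < c) :
    ∃ ε₀ > 0, ∀ ε : ℝ, 0 < ε → ε < ε₀ → c * ε < √√(a * ε) := by
  refine ⟨min 1 (a / c ^ 4), by positivity, fun ε hε hε₀ => ?_⟩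
  have hε1 : ε < 1 := hε₀.trans_le (min_le_left _ _)
  have hεa : ε * c ^ 4 < a :=
    (lt_div_iff₀ (by positivity)).mp (hε₀.trans_le (min_le_right _ _))
  have hε3 : ε ^ 3 ≤ ε := by
    simpa using pow_le_pow_of_le_one hε.le hε1.le (by norm_num : 1 ≤ 3)
  rw [lt_sqrt_sqrt_iff (by positivity)]
  calc (c * ε) ^ 4 = ε * (ε ^ 3 * c ^ 4) := by ring
    _ ≤ ε * (ε * c ^ 4) := by gcongr
    _ < ε * a := by gcongr
    _ = a * ε := mul_comm ε a

theorem stmt_4 {n : ℕ} (w v : Fin (n+1) → ℝ)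
    -- p = η(w,·) lies in the interior of the dual cone:
    (hint : ∀ u : Fin (n+1) → ℝ, IsCausalVec u → u ≠ 0 → mink w u < 0)
    -- v is a nonzero null (boundary causal) vector:
    (hnull : mink v v = 0) (hv0 : 0 < v 0) :
    (∀ ε : ℝ, 0 < ε →
        Real.sqrt (Real.sqrt (2 * v 0 * ε))
          ≤ Real.sqrt (Real.sqrt |mink (v + ε • e0) (v + ε • e0)|)) ∧
    (∃ ε₀ > (0:ℝ), ∀ ε : ℝ, 0 < ε → ε < ε₀ →
        mink w v <
          mink w (v + ε • e0) + Real.sqrt (Real.sqrt |mink (v + ε • e0) (v + ε • e0)|)) ∧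
    ¬ (∀ u : Fin (n+1) → ℝ, IsCausalVec u →
        mink w u + Real.sqrt (Real.sqrt |mink u u|)
          ≤ mink w v + Real.sqrt (Real.sqrt |mink v v|)) := by
  have hgrowth : ∀ ε : ℝ, 0 < ε →
      √√(2 * v 0 * ε) ≤ √√|mink (v + ε • e0) (v + ε • e0)| := fun ε hε => by
    rw [abs_mink_add_smul_e0_self_of_null hnull hv0.le hε.le]
    gcongr
    nlinarith
  have hincrease : ∃ ε₀ > (0:ℝ), ∀ ε : ℝ, 0 < ε → ε < ε₀ →
      mink w v < mink w (v + ε • e0) + √√|mink (v + ε • e0) (v + ε • e0)| := by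
    obtain ⟨ε₀, hε₀, hsmall⟩ := exists_forall_mul_lt_sqrt_sqrt_mul
      (by positivity : 0 < 2 * v 0) (apply_zero_pos_of_mink_neg hint)
    refine ⟨ε₀, hε₀, fun ε hε hεε₀ => ?_⟩
    have hlin : mink w (v + ε • e0) = mink w v - w 0 * ε := by
      rw [mink_add_smul_right, mink_e0_right]; ring
    linarith [hsmall ε hε hεε₀, hgrowth ε hε]
  refine ⟨hgrowth, hincrease, fun hmax => ?_⟩
  obtain ⟨ε₀, hε₀, hlt⟩ := hincrease
  have hcausal : IsCausalVec (v + (ε₀ / 2) • e0) :=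
    IsCausalVec.add_smul_e0 ⟨hnull.le, hv0.le⟩ (by positivity)
  have hle := hmax _ hcausal
  rw [hnull, abs_zero, Real.sqrt_zero, Real.sqrt_zero] at hle
  linarith [hlt (ε₀ / 2) (by positivity) (by linarith)]
end

section
/- The Legendre transform (x,v) ↦ (x, ½|v|_g^{-3/2} g(v,·)) is a diffeomorphism from the interior of the future causal cone bundle onto the interior of the future causal cone bundle in the cotangent bundle. In particular, in a single tangent space, the map v ↦ ½|v|_η^{-3/2} η(v,·) is a smooth bijection from the open future timelike cone in Minkowski ℝⁿ onto the open cone of covectors dual to future timelike vectors, with smooth inverse. -/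
/-- The open future timelike cone {v : η(v,v) < 0, v⁰ > 0}. -/
def posCone (n : ℕ) : Set (Fin (n+1) → ℝ) := {v | mink v v < 0 ∧ 0 < v 0}

/-- The Legendre transform in η-dual representation: ℒ(v) = ½|v|_η^{-3/2} v,
so that the associated covector is η(ℒ(v),·) = ∂L/∂v (v) for L(v) = -|v|_η^{1/2}. -/
noncomputable def legT {n : ℕ} (v : Fin (n+1) → ℝ) : Fin (n+1) → ℝ :=
  (((1:ℝ)/2) * (Real.sqrt (-(mink v v))) ^ (-(3:ℝ)/2)) • v

/-- The inverse Legendre transform: S(w) = ¼|w|_η^{-3} w. -/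
noncomputable def sInv {n : ℕ} (w : Fin (n+1) → ℝ) : Fin (n+1) → ℝ :=
  (((1:ℝ)/4) * (Real.sqrt (-(mink w w))) ^ (-(3:ℝ))) • w

lemma mink_smul {n : ℕ} (a : ℝ) (v : Fin (n+1) → ℝ) :
    mink (a • v) (a • v) = a^2 * mink v v := by
  simp only [mink, Pi.smul_apply, smul_eq_mul]
  rw [show (∑ i, a * v i * (a * v i)) = a^2 * ∑ i, v i * v i by
    rw [Finset.mul_sum]; exact Finset.sum_congr rfl fun i _ => by ring]
  ring

lemma rpow_neg_three {x : ℝ} (hx : 0 < x) : x ^ (-(3:ℝ)) = (x^3)⁻¹ := by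
  rw [Real.rpow_neg hx.le, show (3:ℝ) = ((3:ℕ):ℝ) by norm_num, Real.rpow_natCast]

lemma coef1 {s : ℝ} (hs : 0 < s) :
    (1/4:ℝ) * ((1:ℝ)/2 * s ^ (-(3:ℝ)/2) * s) ^ (-(3:ℝ)) * ((1:ℝ)/2 * s ^ (-(3:ℝ)/2)) = 1 := by
  have hu : 0 < s ^ (-(3:ℝ)/2) := Real.rpow_pos_of_pos hs _
  have h1 : s ^ (-(3:ℝ)/2) * s ^ (-(3:ℝ)/2) = (s^3)⁻¹ := by
    rw [← Real.rpow_add hs, show -(3:ℝ)/2 + -(3:ℝ)/2 = -(3:ℝ) by ring, rpow_neg_three hs]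
  have h2 : (s ^ (-(3:ℝ)/2))^2 * s^3 = 1 := by
    rw [sq, h1, inv_mul_cancel₀ (by positivity)]
  rw [rpow_neg_three (by positivity)]
  field_simp
  nlinarith [h2, hu, hs, pow_pos hs 3, pow_pos hu 3]

lemma coef2 {s : ℝ} (hs : 0 < s) :
    (1/2:ℝ) * ((1:ℝ)/4 * s ^ (-(3:ℝ)) * s) ^ (-(3:ℝ)/2) * ((1:ℝ)/4 * s ^ (-(3:ℝ))) = 1 := by
  have hx : 0 < (1/2:ℝ) * s⁻¹ := by positivity
  have hpow : (((1/2:ℝ) * s⁻¹)^2) ^ (-(3:ℝ)/2) = (((1/2:ℝ) * s⁻¹)^3)⁻¹ := by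
    rw [← Real.rpow_natCast ((1/2:ℝ) * s⁻¹) 2, ← Real.rpow_mul hx.le,
      show ((2:ℕ):ℝ) * (-(3:ℝ)/2) = -(3:ℝ) by push_cast; ring, rpow_neg_three hx]
  rw [rpow_neg_three hs,
    show (1/4:ℝ) * (s^3)⁻¹ * s = ((1/2:ℝ) * s⁻¹)^2 by field_simp; ring, hpow]
  field_simp
  ring

lemma legT_mem {n : ℕ} {v : Fin (n+1) → ℝ} (hv : v ∈ posCone n) : legT v ∈ posCone n := by
  have hq : 0 < -(mink v v) := neg_pos.mpr hv.1
  have hs : 0 < Real.sqrt (-(mink v v)) := Real.sqrt_pos.mpr hq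
  have hc : 0 < ((1:ℝ)/2) * (Real.sqrt (-(mink v v))) ^ (-(3:ℝ)/2) := by
    have := Real.rpow_pos_of_pos hs (-(3:ℝ)/2); linarith
  constructor
  · rw [legT, mink_smul]
    exact mul_neg_of_pos_of_neg (by positivity) hv.1
  · simpa [legT] using mul_pos hc hv.2

lemma sInv_mem {n : ℕ} {w : Fin (n+1) → ℝ} (hw : w ∈ posCone n) : sInv w ∈ posCone n := by
  have hq : 0 < -(mink w w) := neg_pos.mpr hw.1
  have hs : 0 < Real.sqrt (-(mink w w)) := Real.sqrt_pos.mpr hq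
  have hc : 0 < ((1:ℝ)/4) * (Real.sqrt (-(mink w w))) ^ (-(3:ℝ)) := by
    have := Real.rpow_pos_of_pos hs (-(3:ℝ)); linarith
  constructor
  · rw [sInv, mink_smul]
    exact mul_neg_of_pos_of_neg (by positivity) hw.1
  · simpa [sInv] using mul_pos hc hw.2

lemma sInv_legT {n : ℕ} {v : Fin (n+1) → ℝ} (hv : v ∈ posCone n) : sInv (legT v) = v := by
  have hq : 0 < -(mink v v) := neg_pos.mpr hv.1
  have hs : 0 < Real.sqrt (-(mink v v)) := Real.sqrt_pos.mpr hq
  have hc : 0 < ((1:ℝ)/2) * (Real.sqrt (-(mink v v))) ^ (-(3:ℝ)/2) := by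
    have := Real.rpow_pos_of_pos hs (-(3:ℝ)/2); linarith
  have hsq : Real.sqrt (-(mink (legT v) (legT v)))
      = ((1:ℝ)/2 * (Real.sqrt (-(mink v v))) ^ (-(3:ℝ)/2)) * Real.sqrt (-(mink v v)) := by
    rw [legT, mink_smul,
      show -(((1:ℝ)/2 * (Real.sqrt (-(mink v v))) ^ (-(3:ℝ)/2))^2 * mink v v)
        = ((1:ℝ)/2 * (Real.sqrt (-(mink v v))) ^ (-(3:ℝ)/2))^2 * -(mink v v) by ring,
      Real.sqrt_mul (by positivity), Real.sqrt_sq hc.le]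
  rw [sInv, hsq, legT, smul_smul, coef1 hs, one_smul]

lemma legT_sInv {n : ℕ} {w : Fin (n+1) → ℝ} (hw : w ∈ posCone n) : legT (sInv w) = w := by
  have hq : 0 < -(mink w w) := neg_pos.mpr hw.1
  have hs : 0 < Real.sqrt (-(mink w w)) := Real.sqrt_pos.mpr hq
  have hd : 0 < ((1:ℝ)/4) * (Real.sqrt (-(mink w w))) ^ (-(3:ℝ)) := by
    have := Real.rpow_pos_of_pos hs (-(3:ℝ)); linarith
  have hsq : Real.sqrt (-(mink (sInv w) (sInv w)))
      = ((1:ℝ)/4 * (Real.sqrt (-(mink w w))) ^ (-(3:ℝ))) * Real.sqrt (-(mink w w)) := by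
    rw [sInv, mink_smul,
      show -(((1:ℝ)/4 * (Real.sqrt (-(mink w w))) ^ (-(3:ℝ)))^2 * mink w w)
        = ((1:ℝ)/4 * (Real.sqrt (-(mink w w))) ^ (-(3:ℝ)))^2 * -(mink w w) by ring,
      Real.sqrt_mul (by positivity), Real.sqrt_sq hd.le]
  rw [legT, hsq, sInv, smul_smul, coef2 hs, one_smul]

lemma mink_contDiff {n : ℕ} : ContDiff ℝ (⊤ : ℕ∞) (fun v : Fin (n+1) → ℝ => mink v v) := by
  unfold mink
  apply ContDiff.sub
  · exact ContDiff.sum fun i _ => (contDiff_apply ℝ ℝ i).mul (contDiff_apply ℝ ℝ i)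
  · exact contDiff_const.mul ((contDiff_apply ℝ ℝ 0).mul (contDiff_apply ℝ ℝ 0))

lemma smooth_aux {n : ℕ} (a e : ℝ) :
    ContDiffOn ℝ (⊤ : ℕ∞) (fun v : Fin (n+1) → ℝ =>
      (a * (Real.sqrt (-(mink v v))) ^ e) • v) (posCone n) := by
  intro v hv
  apply ContDiffAt.contDiffWithinAt
  have hq : 0 < -(mink v v) := neg_pos.mpr hv.1
  have h1 : ContDiffAt ℝ (⊤ : ℕ∞) (fun v : Fin (n+1) → ℝ => -(mink v v)) v :=
    (mink_contDiff.neg).contDiffAt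
  have h2 : ContDiffAt ℝ (⊤ : ℕ∞) (fun v : Fin (n+1) → ℝ => Real.sqrt (-(mink v v))) v :=
    (Real.contDiffAt_sqrt hq.ne').comp v h1
  have h3 : ContDiffAt ℝ (⊤ : ℕ∞) (fun v : Fin (n+1) → ℝ =>
      (Real.sqrt (-(mink v v))) ^ e) v := by
    have hs : Real.sqrt (-(mink v v)) ≠ 0 := (Real.sqrt_pos.mpr hq).ne'
    exact (Real.contDiffAt_rpow_const_of_ne hs).comp v h2
  exact ((contDiffAt_const.mul h3)).smul contDiffAt_id

theorem stmt_5 {n : ℕ} :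
    Set.InjOn (legT (n := n)) (posCone n) ∧
    legT '' posCone n = posCone n ∧
    ContDiffOn ℝ (⊤ : ℕ∞) (legT (n := n)) (posCone n) ∧
    ∃ S : (Fin (n+1) → ℝ) → (Fin (n+1) → ℝ),
      ContDiffOn ℝ (⊤ : ℕ∞) S (posCone n) ∧
      (∀ v ∈ posCone n, S (legT v) = v) ∧
      (∀ w ∈ posCone n, legT (S w) = w) := by
  refine ⟨?_, ?_, ?_, sInv, ?_, fun v hv => sInv_legT hv, fun w hw => legT_sInv hw⟩
  · intro x hx y hy h
    have := congrArg sInv h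
    rwa [sInv_legT hx, sInv_legT hy] at this
  · ext w
    constructor
    · rintro ⟨v, hv, rfl⟩; exact legT_mem hv
    · intro hw; exact ⟨sInv w, sInv_mem hw, legT_sInv hw⟩
  · exact smooth_aux _ _
  · exact smooth_aux _ _
end

section
/- Let N be a pseudo-Riemannian manifold and x₀ ∈ N. Then there exists a chart (φ,U) centered at x₀ such that for any r > 0 with B_r(0) ⊆ φ(U) and any geodesic γ:[a,b]→U with φ(γ(a)) ∈ B_r(0) and φ(γ(t₀)) ∉ B_r(0) for some t₀ ∈ [a,b], the function t ↦ |φ(γ(t))| (Euclidean norm) is non-decreasing on [t₀,b]. -/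
open Metric Set
open scoped RealInnerProductSpace

theorem stmt_6 {m : ℕ}
    (F : EuclideanSpace ℝ (Fin m) → EuclideanSpace ℝ (Fin m) → EuclideanSpace ℝ (Fin m))
    (hF : ContDiff ℝ (⊤ : ℕ∞) (fun p : EuclideanSpace ℝ (Fin m) × EuclideanSpace ℝ (Fin m) =>
      F p.1 p.2))
    (hhom : ∀ x v (c : ℝ), F x (c • v) = (c^2) • F x v)
    (x₀ : EuclideanSpace ℝ (Fin m)) :
    ∃ R > (0:ℝ), ∀ r : ℝ, 0 < r → Metric.ball (0 : EuclideanSpace ℝ (Fin m)) r ⊆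
        Metric.ball (0 : EuclideanSpace ℝ (Fin m)) R →
      ∀ (γ v : ℝ → EuclideanSpace ℝ (Fin m)) (a b t₀ : ℝ), a ≤ b → t₀ ∈ Set.Icc a b →
        (∀ t ∈ Set.Icc a b, HasDerivAt γ (v t) t ∧ HasDerivAt v (F (γ t) (v t)) t) →
        (∀ t ∈ Set.Icc a b, γ t ∈ Metric.ball x₀ R) →
        γ a - x₀ ∈ Metric.ball (0 : EuclideanSpace ℝ (Fin m)) r →
        γ t₀ - x₀ ∉ Metric.ball (0 : EuclideanSpace ℝ (Fin m)) r →
        MonotoneOn (fun t => ‖γ t - x₀‖) (Set.Icc t₀ b) := by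
  classical
  have hF0 : ∀ x, F x (0 : EuclideanSpace ℝ (Fin m)) = 0 := by
    intro x
    have := hhom x 0 (0 : ℝ)
    simpa using this
  -- bound on F on a compact set
  obtain ⟨C, hC⟩ : ∃ C, ∀ p ∈ (closedBall x₀ 1 ×ˢ closedBall (0 : EuclideanSpace ℝ (Fin m)) 1),
      ‖F p.1 p.2‖ ≤ C := by
    have hK : IsCompact (closedBall x₀ 1 ×ˢ closedBall (0 : EuclideanSpace ℝ (Fin m)) 1) :=
      (isCompact_closedBall _ _).prod (isCompact_closedBall _ _)
    exact hK.exists_bound_of_continuousOn hF.continuous.continuousOn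
  have hC0 : 0 ≤ C := by
    have := hC (x₀, 0) ⟨mem_closedBall_self one_pos.le, mem_closedBall_self one_pos.le⟩
    simpa [hF0] using (norm_nonneg _).trans this
  -- quadratic bound
  have hCb : ∀ x ∈ closedBall x₀ 1, ∀ w : EuclideanSpace ℝ (Fin m),
      ‖F x w‖ ≤ C * ‖w‖ ^ 2 := by
    intro x hx w
    by_cases hw : w = 0
    · simp [hw, hF0, mul_nonneg hC0 (sq_nonneg _)]
    · have hwn : (0:ℝ) < ‖w‖ := norm_pos_iff.mpr hw
      set u : EuclideanSpace ℝ (Fin m) := ‖w‖⁻¹ • w with hu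
      have huw : ‖w‖ • u = w := by
        rw [hu, smul_smul, mul_inv_cancel₀ hwn.ne', one_smul]
      have hun : ‖u‖ = 1 := by
        rw [hu, norm_smul, norm_inv, norm_norm, inv_mul_cancel₀ hwn.ne']
      have hFu : ‖F x u‖ ≤ C := hC (x, u) ⟨hx, by simp [mem_closedBall, hun]⟩
      have : F x w = (‖w‖ ^ 2) • F x u := by rw [← huw, hhom, huw]
      rw [this, norm_smul]
      have : |‖w‖ ^ 2| = ‖w‖ ^ 2 := abs_of_nonneg (sq_nonneg _)
      rw [Real.norm_eq_abs, this]
      calc ‖w‖ ^ 2 * ‖F x u‖ ≤ ‖w‖ ^ 2 * C := by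
            exact mul_le_mul_of_nonneg_left hFu (sq_nonneg _)
        _ = C * ‖w‖ ^ 2 := mul_comm _ _
  set R : ℝ := min 1 (C + 1)⁻¹ with hRdef
  have hRpos : 0 < R := lt_min one_pos (by positivity)
  have hR1 : R ≤ 1 := min_le_left _ _
  have hRC : R * C ≤ 1 := by
    have h1 : R ≤ (C + 1)⁻¹ := min_le_right _ _
    have h2 : (C + 1) * (C + 1)⁻¹ = 1 := mul_inv_cancel₀ (by positivity)
    nlinarith
  refine ⟨R, hRpos, ?_⟩
  intro r hr hrR γ v a b t₀ hab ht₀ hode hin ha ht₀out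
  -- the squared norm function
  set g : ℝ → ℝ := fun t => ⟪γ t - x₀, γ t - x₀⟫ with hgdef
  have hgnorm : ∀ t, g t = ‖γ t - x₀‖ ^ 2 := fun t => real_inner_self_eq_norm_sq _
  set g1 : ℝ → ℝ := fun t => 2 * ⟪v t, γ t - x₀⟫ with hg1def
  set g2 : ℝ → ℝ := fun t => 2 * (⟪v t, v t⟫ + ⟪F (γ t) (v t), γ t - x₀⟫) with hg2def
  have hder1 : ∀ t ∈ Set.Icc a b, HasDerivAt g (g1 t) t := by
    intro t ht
    have hγ : HasDerivAt (fun s => γ s - x₀) (v t) t := (hode t ht).1.sub_const x₀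
    have h2 := hγ.inner ℝ hγ
    rw [real_inner_comm (v t) (γ t - x₀), ← two_mul] at h2
    exact h2
  have hder2 : ∀ t ∈ Set.Icc a b, HasDerivAt g1 (g2 t) t := by
    intro t ht
    have hγ : HasDerivAt (fun s => γ s - x₀) (v t) t := (hode t ht).1.sub_const x₀
    have hv : HasDerivAt v (F (γ t) (v t)) t := (hode t ht).2
    exact (hv.inner ℝ hγ).const_mul (2:ℝ)
  have hg2nonneg : ∀ t ∈ Set.Icc a b, 0 ≤ g2 t := by
    intro t ht
    have hx : ‖γ t - x₀‖ < R := by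
      have := hin t ht
      rwa [mem_ball, dist_eq_norm] at this
    have hFb : ‖F (γ t) (v t)‖ ≤ C * ‖v t‖ ^ 2 := by
      refine hCb _ ?_ _
      rw [mem_closedBall, dist_eq_norm]
      exact (hx.trans_le hR1).le
    have hip : |⟪F (γ t) (v t), γ t - x₀⟫| ≤ ‖F (γ t) (v t)‖ * ‖γ t - x₀‖ :=
      abs_real_inner_le_norm _ _
    have hvv : ⟪v t, v t⟫ = ‖v t‖ ^ 2 := real_inner_self_eq_norm_sq _
    have hmul : ‖F (γ t) (v t)‖ * ‖γ t - x₀‖ ≤ C * ‖v t‖ ^ 2 * R :=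
      mul_le_mul hFb hx.le (norm_nonneg _) (by positivity)
    have hRCv : C * ‖v t‖ ^ 2 * R ≤ ‖v t‖ ^ 2 := by nlinarith [sq_nonneg (‖v t‖)]
    rw [hg2def]
    have habs := abs_le.mp hip
    dsimp only
    rw [hvv]
    nlinarith
  -- convexity of g on [a, b]
  have hconv : ConvexOn ℝ (Set.Icc a b) g := by
    refine convexOn_of_hasDerivWithinAt2_nonneg (f' := g1) (f'' := g2) (convex_Icc a b) ?_ ?_ ?_ ?_
    · exact fun t ht => ((hder1 t ht).continuousAt).continuousWithinAt
    · intro t ht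
      rw [interior_Icc] at ht
      exact (hder1 t (Set.mem_Icc_of_Ioo ht)).hasDerivWithinAt
    · intro t ht
      rw [interior_Icc] at ht
      exact (hder2 t (Set.mem_Icc_of_Ioo ht)).hasDerivWithinAt
    · intro t ht
      rw [interior_Icc] at ht
      exact hg2nonneg t (Set.mem_Icc_of_Ioo ht)
  -- endpoints
  have hga : ‖γ a - x₀‖ < r := by rwa [mem_ball, dist_zero_right] at ha
  have hgt₀ : r ≤ ‖γ t₀ - x₀‖ := by
    by_contra h
    push_neg at h
    exact ht₀out (by rwa [mem_ball, dist_zero_right])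
  have hglt : g a < g t₀ := by
    rw [hgnorm, hgnorm]
    nlinarith [norm_nonneg (γ a - x₀)]
  have hat₀ : a < t₀ := by
    rcases lt_or_eq_of_le ht₀.1 with h | h
    · exact h
    · rw [h] at hglt; exact absurd hglt (lt_irrefl _)
  -- monotonicity of g on [t₀, b]
  have hgmono : ∀ s ∈ Set.Icc t₀ b, ∀ t ∈ Set.Icc t₀ b, s < t → g s ≤ g t := by
    intro s hs t ht hst
    have haI : a ∈ Set.Icc a b := ⟨le_refl _, hab⟩
    have hsI : s ∈ Set.Icc a b := ⟨hat₀.le.trans hs.1, hs.2⟩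
    have htI : t ∈ Set.Icc a b := ⟨hat₀.le.trans ht.1, ht.2⟩
    have ht₀I : t₀ ∈ Set.Icc a b := ht₀
    have hL : 0 < (g t₀ - g a) / (t₀ - a) := div_pos (by linarith) (by linarith)
    rcases eq_or_lt_of_le hs.1 with h | h
    · -- t₀ = s
      have htt : t₀ < t := by rw [h]; exact hst
      have hadj := hconv.slope_mono_adjacent haI htI hat₀ htt
      have h2 : 0 < (g t - g t₀) / (t - t₀) := lt_of_lt_of_le hL hadj
      rcases div_pos_iff.mp h2 with ⟨h5, _⟩ | ⟨_, h6⟩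
      · rw [← h]; linarith
      · linarith
    · -- t₀ < s
      have h1 := hconv.slope_mono_adjacent haI hsI hat₀ h
      have h2 := hconv.slope_mono_adjacent ht₀I htI h hst
      have hLs : 0 < (g s - g t₀) / (s - t₀) := lt_of_lt_of_le hL h1
      have h3 : 0 < (g t - g s) / (t - s) := lt_of_lt_of_le hLs h2
      have h4 : 0 < t - s := by linarith
      rcases div_pos_iff.mp h3 with ⟨h5, _⟩ | ⟨_, h6⟩
      · linarith
      · linarith
  intro s hs t ht hst
  rcases eq_or_lt_of_le hst with h | h
  · subst h; exact le_refl _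
  · have := hgmono s hs t ht h
    rw [hgnorm, hgnorm] at this
    have h1 : 0 ≤ ‖γ t - x₀‖ := norm_nonneg _
    have h2 : 0 ≤ ‖γ s - x₀‖ := norm_nonneg _
    nlinarith
end

section
/- Let γ:[a,b]→ℝⁿ be a C² curve with |γ'(t)| ≥ δ₁ > 0 and |γ''(t)| ≤ C for all t, and suppose |γ(t)| < δ₁²/C for all t ∈ [a,b]. Then |γ(t)|² has no interior local maximum on (a,b); equivalently, if d/dt |γ(t)|² ≥ 0 at some point t₀, then t ↦ |γ(t)| is non-decreasing on [t₀,b]. -/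
/-!
Write `f = ‖γ‖²`, so `f' = 2⟪γ, γ'⟫` and `(⟪γ, γ'⟫)' = ‖γ'‖² + ⟪γ, γ''⟫ ≥ δ₁² - ‖γ‖ C > 0`.
Hence `⟪γ, γ'⟫` is strictly increasing, and once `f'(t₀) ≥ 0` it stays positive after `t₀`,
so `f` is strictly increasing on `[t₀, b]`. An interior local maximum `t₃` would have
`f'(t₃) = 0`, making `f` strictly increasing just to the right of `t₃`.
-/

open Set

lemma strictMonoOn_Icc_of_hasDerivAt_pos {a b : ℝ} {f f' : ℝ → ℝ}
    (hf : ∀ x ∈ Icc a b, HasDerivAt f (f' x) x) (hf' : ∀ x ∈ Ioo a b, 0 < f' x) :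
    StrictMonoOn f (Icc a b) := by
  refine strictMonoOn_of_hasDerivWithinAt_pos (f' := f') (convex_Icc a b)
    (fun x hx => (hf x hx).continuousAt.continuousWithinAt)
    (fun x hx => (hf x (interior_subset hx)).hasDerivWithinAt) ?_
  rwa [interior_Icc]

lemma strictMonoOn_Icc_of_hasDerivAt_of_strictMonoOn {a b : ℝ} {f f' : ℝ → ℝ}
    (hf : ∀ x ∈ Icc a b, HasDerivAt f (f' x) x) (hf' : StrictMonoOn f' (Icc a b))
    (ha : 0 ≤ f' a) : StrictMonoOn f (Icc a b) :=
  strictMonoOn_Icc_of_hasDerivAt_pos hf fun _ hx =>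
    ha.trans_lt <| hf' (left_mem_Icc.2 (hx.1.trans hx.2).le) (Ioo_subset_Icc_self hx) hx.1

lemma not_isLocalMax_of_strictMonoOn_Icc {a b : ℝ} {f : ℝ → ℝ} (hf : StrictMonoOn f (Icc a b))
    (hab : a < b) : ¬ IsLocalMax f a := by
  intro hmax
  obtain ⟨c, hc, hca⟩ := ((hmax.filter_mono nhdsWithin_le_nhds).and
    (Ioo_mem_nhdsGT hab)).exists
  exact (hf (left_mem_Icc.2 hab.le) (Ioo_subset_Icc_self hca) hca.1).not_ge hc

section Curve

variable {E : Type*} [NormedAddCommGroup E] [InnerProductSpace ℝ E]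

lemma inner_add_norm_sq_pos {x w u : E} (h : ‖x‖ * ‖w‖ < ‖u‖ ^ 2) :
    0 < inner ℝ x w + ‖u‖ ^ 2 := by
  have := neg_le_of_abs_le (abs_real_inner_le_norm x w)
  linarith

lemma strictMonoOn_norm_sq_of_inner_nonneg {γ v A : ℝ → E} {t₀ b : ℝ}
    (hγ : ∀ t ∈ Icc t₀ b, HasDerivAt γ (v t) t) (hv : ∀ t ∈ Icc t₀ b, HasDerivAt v (A t) t)
    (hcurv : ∀ t ∈ Icc t₀ b, ‖γ t‖ * ‖A t‖ < ‖v t‖ ^ 2) (h₀ : 0 ≤ inner ℝ (γ t₀) (v t₀)) :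
    StrictMonoOn (fun t => ‖γ t‖ ^ 2) (Icc t₀ b) := by
  have hinner : StrictMonoOn (fun t => 2 * inner ℝ (γ t) (v t)) (Icc t₀ b) := by
    refine strictMonoOn_Icc_of_hasDerivAt_pos
      (fun t ht => ((hγ t ht).inner ℝ (hv t ht)).const_mul 2) fun t ht => ?_
    have ht := Ioo_subset_Icc_self ht
    rw [real_inner_self_eq_norm_sq]
    linarith [inner_add_norm_sq_pos (hcurv t ht)]
  exact strictMonoOn_Icc_of_hasDerivAt_of_strictMonoOn (fun t ht => (hγ t ht).norm_sq) hinner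
    (by linarith)

end Curve

theorem stmt_7 {n : ℕ} (γ v A : ℝ → EuclideanSpace ℝ (Fin n)) (a b δ₁ C : ℝ)
    (hδ : 0 < δ₁) (hC : 0 < C)
    (hderiv : ∀ t ∈ Set.Icc a b, HasDerivAt γ (v t) t ∧ HasDerivAt v (A t) t)
    (hv : ∀ t ∈ Set.Icc a b, δ₁ ≤ ‖v t‖)
    (hA : ∀ t ∈ Set.Icc a b, ‖A t‖ ≤ C)
    (hγ : ∀ t ∈ Set.Icc a b, ‖γ t‖ < δ₁^2 / C) :
    (¬ ∃ t₃ ∈ Set.Ioo a b, IsLocalMax (fun t => ‖γ t‖^2) t₃) ∧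
    ∀ t₀ ∈ Set.Icc a b, 0 ≤ deriv (fun t => ‖γ t‖^2) t₀ →
      MonotoneOn (fun t => ‖γ t‖) (Set.Icc t₀ b) := by
  have hcurv (t) (ht : t ∈ Icc a b) : ‖γ t‖ * ‖A t‖ < ‖v t‖ ^ 2 :=
    calc ‖γ t‖ * ‖A t‖ ≤ ‖γ t‖ * C := by gcongr; exact hA t ht
      _ < δ₁ ^ 2 := (lt_div_iff₀ hC).1 (hγ t ht)
      _ ≤ ‖v t‖ ^ 2 := by gcongr; exact hv t ht
  have hmono (t₀) (ht₀ : t₀ ∈ Icc a b) (h₀ : 0 ≤ inner ℝ (γ t₀) (v t₀)) :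
      StrictMonoOn (fun t => ‖γ t‖ ^ 2) (Icc t₀ b) := by
    have hsub : Icc t₀ b ⊆ Icc a b := Icc_subset_Icc_left ht₀.1
    exact strictMonoOn_norm_sq_of_inner_nonneg (fun t ht => (hderiv t (hsub ht)).1)
      (fun t ht => (hderiv t (hsub ht)).2) (fun t ht => hcurv t (hsub ht)) h₀
  refine ⟨fun ⟨t₃, ht₃, hmax⟩ => ?_, fun t₀ ht₀ hd => ?_⟩
  · have ht₃' := Ioo_subset_Icc_self ht₃
    have hcrit := hmax.hasDerivAt_eq_zero (hderiv t₃ ht₃').1.norm_sq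
    exact not_isLocalMax_of_strictMonoOn_Icc (hmono t₃ ht₃' (by linarith)) ht₃.2 hmax
  · rw [(hderiv t₀ ht₀).1.norm_sq.deriv] at hd
    intro x hx y hy hxy
    exact (pow_le_pow_iff_left₀ (norm_nonneg _) (norm_nonneg _) two_ne_zero).1
      ((hmono t₀ ht₀ (by linarith)).monotoneOn hx hy hxy)
end
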